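/- Let G be a finite simple graph and let G' be obtained from G by deleting a set of k edges of G. Then γ_gr^L(G) − k ≤ γ_gr^L(G') ≤ γ_gr^L(G) + 2k. -/

import Mathlib

/-- A list of distinct vertices `s = (v_1, …, v_k)` is an *L-sequence* of `G` if for each `i`,
`N[v_i] \ ⋃_{j<i} N(v_j) ≠ ∅`, i.e. there is a vertex `w` in the closed neighborhood of `v_i`
that lies in no open neighborhood `N(v_j)` for `j < i`. -/
def IsLSeq {V : Type*} (G : SimpleGraph V) (s : List V) : Prop :=
  s.Nodup ∧ ∀ i : Fin s.length, ∃ w : V,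
    (w = s.get i ∨ G.Adj (s.get i) w) ∧
    ∀ j : Fin s.length, j < i → ¬ G.Adj (s.get j) w

/-- The L-Grundy domination number of `G`: the maximum length of an L-sequence of `G`. -/
noncomputable def LGrundy {V : Type*} [Fintype V] (G : SimpleGraph V) : ℕ :=
  sSup {k : ℕ | ∃ s : List V, IsLSeq G s ∧ s.length = k}

/-!
Let `F` be the deleted edge set. Erasing from an L-sequence of `G - F` every endpoint of an edge
of `F` (at most `2k` vertices) leaves an L-sequence of `G`: each remaining vertex keeps its
footprint, since every edge that comes back has both ends erased. Conversely, deleting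
a single edge `e` spoils the footprint of at most one vertex of an L-sequence of `G`, and
erasing it leaves an L-sequence of `G - e`; the lower bound follows by induction on `k`.
-/

section

variable {V : Type*} {G H : SimpleGraph V} {l l' s : List V} {v w : V}

def SimpleGraph.Footprints (G : SimpleGraph V) (l : List V) (v w : V) : Prop :=
  (w = v ∨ G.Adj v w) ∧ ∀ u ∈ l, ¬ G.Adj u w

theorem SimpleGraph.Footprints.of_subset (h : G.Footprints l v w) (hl : l' ⊆ l) :
    G.Footprints l' v w :=
  ⟨h.1, fun u hu => h.2 u (hl hu)⟩

theorem SimpleGraph.Footprints.of_le (h : G.Footprints l v w) (hHG : H ≤ G)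
    (hw : w = v ∨ H.Adj v w) : H.Footprints l v w :=
  ⟨hw, fun u hu huw => h.2 u hu (hHG huw)⟩

theorem isLSeq_iff_footprints :
    IsLSeq G s ↔
      s.Nodup ∧ ∀ i (hi : i < s.length), ∃ w, G.Footprints (s.take i) s[i] w := by
  simp only [IsLSeq, SimpleGraph.Footprints, Fin.forall_iff, List.get_eq_getElem,
    List.mem_take_iff_getElem]
  refine and_congr_right fun _ => forall₂_congr fun i hi => exists_congr fun w =>
    and_congr_right fun _ => ⟨?_, ?_⟩
  · rintro h u ⟨j, hj, rfl⟩
    exact h j (by omega) (Fin.mk_lt_mk.mpr (by omega))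
  · intro h j hj hji
    exact h _ ⟨j, by simp only [Fin.mk_lt_mk] at hji; omega, rfl⟩

theorem isLSeq_nil : IsLSeq G [] := by
  simp [isLSeq_iff_footprints]

theorem isLSeq_append_singleton :
    IsLSeq G (s ++ [v]) ↔ IsLSeq G s ∧ v ∉ s ∧ ∃ w, G.Footprints s v w := by
  simp only [isLSeq_iff_footprints, List.nodup_append, List.length_append,
    List.length_singleton, List.nodup_singleton, List.mem_singleton, true_and]
  constructor
  · rintro ⟨⟨hs, hv⟩, h⟩
    refine ⟨⟨hs, fun i hi => ?_⟩, fun hvs => hv v hvs v rfl rfl, ?_⟩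
    · simpa [List.take_append_of_le_length hi.le, List.getElem_append_left hi]
        using h i (by omega)
    · simpa using h s.length (by omega)
  · rintro ⟨⟨hs, h⟩, hv, w, hw⟩
    refine ⟨⟨hs, fun u hu _ hb huv => hv (hb ▸ huv ▸ hu)⟩, fun i hi => ?_⟩
    rcases Nat.lt_succ_iff_lt_or_eq.mp hi with hi | rfl
    · simpa [List.take_append_of_le_length hi.le, List.getElem_append_left hi] using h i hi
    · exact ⟨w, by simpa using hw⟩

theorem IsLSeq.filter_notMem [DecidableEq V] {A : Finset V} (hHG : H ≤ G)
    (hA : ∀ x y, G.Adj x y → ¬ H.Adj x y → x ∈ A) (h : IsLSeq H s) :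
    IsLSeq G (s.filter (· ∉ A)) := by
  induction s using List.reverseRecOn with
  | nil => exact isLSeq_nil
  | append_singleton s v ih =>
    obtain ⟨hs, hv, w, hw⟩ := isLSeq_append_singleton.mp h
    by_cases hvA : v ∈ A
    · have hfilter : (s ++ [v]).filter (· ∉ A) = s.filter (· ∉ A) := by simp [hvA]
      exact hfilter ▸ ih hs
    · have hfoot : G.Footprints (s.filter (· ∉ A)) v w := by
        refine ⟨hw.1.imp_right (hHG ·), fun u hu huw => ?_⟩
        obtain ⟨hus, huA⟩ := List.mem_filter.mp hu
        exact of_decide_eq_true huA (hA u w huw (hw.2 u hus))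
      have hfilter : (s ++ [v]).filter (· ∉ A) = s.filter (· ∉ A) ++ [v] := by simp [hvA]
      rw [hfilter, isLSeq_append_singleton]
      exact ⟨ih hs, fun hvs => hv (List.mem_of_mem_filter hvs), w, hfoot⟩

theorem List.Nodup.length_le_length_filter_notMem_add_card [DecidableEq V] (hl : l.Nodup)
    (A : Finset V) : l.length ≤ (l.filter (· ∉ A)).length + A.card := by
  have hsplit := List.length_eq_length_filter_add (l := l) (· ∉ A)
  have hA : (l.filter fun x => !decide (x ∉ A)).toFinset ⊆ A := by
    intro x hx
    simpa using (List.mem_filter.mp (List.mem_toFinset.mp hx)).2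
  have := Finset.card_le_card hA
  rw [List.toFinset_card_of_nodup (hl.filter _)] at this
  omega

/-- A vertex of an L-sequence of `G` that footprints nothing in `G - e` is an endpoint `x` of `e`
adjacent to an earlier vertex; a second such vertex would have to footprint `x`, which is
impossible. So at most one vertex has to be erased. -/
theorem IsLSeq.deleteEdge_or_erase {e : Sym2 V} [DecidableEq V] (h : IsLSeq G s) :
    IsLSeq (G.deleteEdges {e}) s ∨
      ∃ x ∈ s, IsLSeq (G.deleteEdges {e}) (s.erase x) ∧
        x ∈ e ∧ ∃ u ∈ s, G.Adj u x := by
  induction s using List.reverseRecOn with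
  | nil => exact Or.inl isLSeq_nil
  | append_singleton s v ih =>
    obtain ⟨hs, hv, w, hw⟩ := isLSeq_append_singleton.mp h
    by_cases hgood : ∃ w', (G.deleteEdges {e}).Footprints s v w'
    · rcases ih hs with hs' | ⟨x, hxs, hx, hxe, u, hus, hux⟩
      · exact Or.inl (isLSeq_append_singleton.mpr ⟨hs', hv, hgood⟩)
      · obtain ⟨w', hw'⟩ := hgood
        refine Or.inr ⟨x, List.mem_append_left _ hxs, ?_, hxe, u, List.mem_append_left _ hus,
          hux⟩
        rw [List.erase_append_left _ hxs, isLSeq_append_singleton]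
        exact ⟨hx, fun hvx => hv (List.mem_of_mem_erase hvx), w',
          hw'.of_subset List.erase_subset⟩
    · simp only [not_exists] at hgood
      obtain ⟨u, hus, huv⟩ : ∃ u ∈ s, G.Adj u v := by
        by_contra! hno
        exact hgood v ⟨Or.inl rfl, fun u hu huv => hno u hu huv.1⟩
      have hwe : e = s(v, w) := by
        by_contra hne
        refine hgood w (hw.of_le (G.deleteEdges_le _) ?_)
        rcases hw.1 with rfl | hvw
        · exact Or.inl rfl
        · exact Or.inr (G.deleteEdges_adj.mpr
            ⟨hvw, fun h => hne (Set.mem_singleton_iff.mp h).symm⟩)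
      rcases ih hs with hs' | ⟨x, hxs, -, hxe, u', hus', hux⟩
      · refine Or.inr ⟨v, by simp, ?_, hwe ▸ Sym2.mem_mk_left v w, u, by simp [hus], huv⟩
        simpa [List.erase_append_right _ hv] using hs'
      · have hxw : x = w := by
          rcases Sym2.mem_iff.mp (hwe ▸ hxe) with rfl | rfl
          · exact absurd hxs hv
          · rfl
        exact absurd (hxw ▸ hux) (hw.2 u' hus')

theorem IsLSeq.exists_deleteEdge (e : Sym2 V) (h : IsLSeq G s) :
    ∃ t, IsLSeq (G.deleteEdges {e}) t ∧ s.length ≤ t.length + 1 := by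
  classical
  rcases h.deleteEdge_or_erase (e := e) with hs | ⟨x, hxs, hx, -⟩
  · exact ⟨s, hs, by omega⟩
  · exact ⟨s.erase x, hx, by rw [List.length_erase_of_mem hxs]; omega⟩

section LGrundy

variable [Fintype V]

theorem bddAbove_lSeq_lengths (G : SimpleGraph V) :
    BddAbove {k : ℕ | ∃ s : List V, IsLSeq G s ∧ s.length = k} := by
  refine ⟨Fintype.card V, ?_⟩
  rintro k ⟨s, hs, rfl⟩
  exact hs.1.length_le_card

theorem IsLSeq.length_le_lgrundy (h : IsLSeq G s) : s.length ≤ LGrundy G :=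
  le_csSup (bddAbove_lSeq_lengths G) ⟨s, h, rfl⟩

theorem exists_isLSeq_length_eq_lgrundy (G : SimpleGraph V) :
    ∃ s : List V, IsLSeq G s ∧ s.length = LGrundy G :=
  Nat.sSup_mem (s := {k : ℕ | ∃ s : List V, IsLSeq G s ∧ s.length = k})
    ⟨0, [], isLSeq_nil, rfl⟩ (bddAbove_lSeq_lengths G)

theorem lgrundy_le_lgrundy_add_card_of_le [DecidableEq V] {A : Finset V} (hHG : H ≤ G)
    (hA : ∀ x y, G.Adj x y → ¬ H.Adj x y → x ∈ A) : LGrundy H ≤ LGrundy G + A.card := by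
  obtain ⟨s, hs, hlen⟩ := exists_isLSeq_length_eq_lgrundy H
  have := (hs.filter_notMem hHG hA).length_le_lgrundy
  have := hs.1.length_le_length_filter_notMem_add_card A
  omega

theorem lgrundy_deleteEdges_le (G : SimpleGraph V) (s : Finset (Sym2 V)) :
    LGrundy (G.deleteEdges ↑s) ≤ LGrundy G + 2 * s.card := by
  classical
  have hcover : ∀ x y, G.Adj x y → ¬ (G.deleteEdges ↑s).Adj x y →
      x ∈ s.biUnion Sym2.toFinset := by
    intro x y hxy hdel
    have hxys : s(x, y) ∈ s := by simpa [hxy] using hdel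
    exact Finset.mem_biUnion.mpr ⟨_, hxys, Sym2.mem_toFinset.mpr (Sym2.mem_mk_left x y)⟩
  have hcard : (s.biUnion Sym2.toFinset).card ≤ s.card * 2 :=
    Finset.card_biUnion_le_card_mul _ _ _ fun e _ => by
      rw [Sym2.card_toFinset]; split_ifs <;> omega
  have := lgrundy_le_lgrundy_add_card_of_le (G.deleteEdges_le ↑s) hcover
  omega

theorem lgrundy_le_lgrundy_deleteEdge_add_one (G : SimpleGraph V) (e : Sym2 V) :
    LGrundy G ≤ LGrundy (G.deleteEdges {e}) + 1 := by
  obtain ⟨s, hs, hlen⟩ := exists_isLSeq_length_eq_lgrundy G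
  obtain ⟨t, ht, hst⟩ := hs.exists_deleteEdge e
  have := ht.length_le_lgrundy
  omega

theorem lgrundy_le_lgrundy_deleteEdges_add_card [DecidableEq V] (G : SimpleGraph V)
    (s : Finset (Sym2 V)) : LGrundy G ≤ LGrundy (G.deleteEdges ↑s) + s.card := by
  induction s using Finset.induction with
  | empty => simp
  | insert e s he ih =>
    have hdel : G.deleteEdges ↑(insert e s) = (G.deleteEdges ↑s).deleteEdges {e} := by
      rw [SimpleGraph.deleteEdges_deleteEdges, Finset.coe_insert, Set.insert_eq, Set.union_comm]
    have := lgrundy_le_lgrundy_deleteEdge_add_one (G.deleteEdges ↑s) e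
    rw [hdel, Finset.card_insert_of_notMem he]
    omega

end LGrundy

end

theorem lgrundy_deleteEdges_general {V : Type*} [Fintype V]
    (G : SimpleGraph V) (s : Finset (Sym2 V)) (k : ℕ)
    (hcard : s.card = k) :
    LGrundy G - k ≤ LGrundy (G.deleteEdges ↑s) ∧
      LGrundy (G.deleteEdges ↑s) ≤ LGrundy G + 2 * k := by
  classical
  subst hcard
  exact ⟨Nat.sub_le_of_le_add (lgrundy_le_lgrundy_deleteEdges_add_card G s),
    lgrundy_deleteEdges_le G s⟩

/-- If `G'` is obtained from `G` by deleting a set of `k` edges of `G`, then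
`γ_gr^L(G) − k ≤ γ_gr^L(G') ≤ γ_gr^L(G) + 2k`. -/
theorem lgrundy_deleteEdges {V : Type*} [Fintype V]
    (G : SimpleGraph V) (s : Finset (Sym2 V)) (hs : ↑s ⊆ G.edgeSet) (k : ℕ)
    (hcard : s.card = k) :
    LGrundy G - k ≤ LGrundy (G.deleteEdges ↑s) ∧
      LGrundy (G.deleteEdges ↑s) ≤ LGrundy G + 2 * k :=
  lgrundy_deleteEdges_general G s k hcard
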